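/- arXiv:2001.04204 — 3 statements merged into one kernel-verified Lean document; each statement's English description precedes it below -/
import Mathlib

section
/- Let A and B be unital associative ℂ-algebras with B having countable dimension over ℂ. If W is a simple A-module and V is a simple B-module, then W ⊗_ℂ V is a simple A ⊗_ℂ B-module. -/
open scoped TensorProduct

/-- The `A ⊗[ℂ] B`-module structure on `W ⊗[ℂ] V`, with `(a ⊗ b) • (w ⊗ v) = (a•w) ⊗ (b•v)`. -/
noncomputable def tensorMod (A B W V : Type) [Ring A] [Algebra ℂ A] [Ring B] [Algebra ℂ B]
    [AddCommGroup W] [Module ℂ W] [Module A W] [IsScalarTower ℂ A W] [SMulCommClass ℂ A W]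
    [AddCommGroup V] [Module ℂ V] [Module B V] [IsScalarTower ℂ B V] [SMulCommClass ℂ B V] :
    Module (A ⊗[ℂ] B) (W ⊗[ℂ] V) :=
  Module.compHom _
    (((Module.endTensorEndAlgHom (R := ℂ) (S := ℂ) (A := ℂ) (M := W) (N := V)).comp
      (Algebra.TensorProduct.map (Algebra.lsmul ℂ ℂ W : A →ₐ[ℂ] Module.End ℂ W)
        (Algebra.lsmul ℂ ℂ V : B →ₐ[ℂ] Module.End ℂ V))).toRingHom)

/-! Since `V` is a quotient of `B`, it has countable `ℂ`-dimension. An endomorphism `f` of `V`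
transcendental over `ℂ` would make the uncountable family `(f - c)⁻¹` linearly independent in the
division ring `End_B V`, hence in `V` after evaluating at a nonzero vector; so `End_B V = ℂ`
(Dixmier). By Jacobson density every `ℂ`-linear map of `V` then agrees with the action of some
`b ∈ B` on any finite set. If `x ≠ 0` lies in a submodule `N` of `W ⊗ V`, pick a functional `φ`
on `V` with `(id ⊗ φ) x ≠ 0` and `b` acting as `φ(·) • v` on the right-hand factors of `x`; then
`(1 ⊗ b) • x = (id ⊗ φ) x ⊗ v` is a pure tensor in `N` with nonzero factors, and such a tensor
generates `W ⊗ V` since `W` and `V` are simple. -/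

open Cardinal

universe u v

section DivisionRing

variable {K : Type u} {D : Type v} [Field K] [DivisionRing D] [Algebra K D]

variable (K) in
theorem isField_centralizer_centralizer_singleton (x : D) :
    IsField (Subalgebra.centralizer K (Set.centralizer {x} : Set D)) where
  exists_pair_ne := ⟨0, 1, zero_ne_one⟩
  mul_comm a b := Subtype.ext <|
    Set.centralizer_centralizer_comm_of_comm (by simp) _ a.2 _ b.2
  mul_inv_cancel {a} ha := ⟨⟨(a : D)⁻¹, Set.inv_mem_centralizer₀ a.2⟩,
    Subtype.ext <| mul_inv_cancel₀ fun h => ha (Subtype.ext h)⟩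

theorem DivisionRing.algebraMap_surjective_of_rank_lt [IsAlgClosed K]
    (hD : lift.{u} (Module.rank K D) < lift.{v} #K) :
    Function.Surjective (algebraMap K D) := by
  intro x
  -- a commutative subfield containing `x`, so that field-only results apply to it
  let E := Subalgebra.centralizer K (Set.centralizer {x} : Set D)
  let : Field E := (isField_centralizer_centralizer_singleton K x).toField
  let y : E := ⟨x, Set.subset_centralizer_centralizer rfl⟩
  by_cases hy : IsAlgebraic K y
  · obtain ⟨c, hc⟩ := hy.isIntegral.mem_range_algebraMap_of_minpoly_splits
      (IsAlgClosed.splits (k := K) _)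
    exact ⟨c, congrArg Subtype.val hc⟩
  · have := ((Transcendental.linearIndependent_sub_inv hy).map' E.val.toLinearMap
      (LinearMap.ker_eq_bot.2 Subtype.val_injective)).cardinal_lift_le_rank
    exact absurd this hD.not_ge

end DivisionRing

theorem IsSimpleModule.algebraMap_end_surjective_of_rank_lt {K : Type u} {R : Type*} {M : Type v}
    [Field K] [IsAlgClosed K] [Ring R] [Algebra K R] [AddCommGroup M] [Module K M] [Module R M]
    [IsScalarTower K R M] [IsSimpleModule R M]
    (hM : lift.{u} (Module.rank K M) < lift.{v} #K) :
    Function.Surjective (algebraMap K (Module.End R M)) := by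
  classical
  have := IsSimpleModule.nontrivial R M
  obtain ⟨m, hm⟩ := exists_ne (0 : M)
  let eval : Module.End R M →ₗ[K] M :=
    { toFun := fun f => f m, map_add' := fun _ _ => rfl, map_smul' := fun _ _ => rfl }
  have heval : Function.Injective eval := fun f g hfg => by
    by_contra hne
    exact hm <| (LinearMap.bijective_of_ne_zero (sub_ne_zero.2 hne)).injective <| by
      simpa [sub_eq_zero, eval] using hfg
  refine DivisionRing.algebraMap_surjective_of_rank_lt (lt_of_le_of_lt ?_ hM)
  exact lift_le.2 (LinearMap.rank_le_of_injective eval heval)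

theorem exists_smul_eq_of_algebraMap_end_surjective {K R M : Type*} [CommSemiring K] [Ring R]
    [Algebra K R] [AddCommGroup M] [Module K M] [Module R M] [IsScalarTower K R M]
    [IsSemisimpleModule R M] (h : Function.Surjective (algebraMap K (Module.End R M)))
    (g : M →ₗ[K] M) (s : Finset M) : ∃ r : R, ∀ m ∈ s, g m = r • m :=
  jacobson_density
    { toFun := g
      map_add' := g.map_add
      map_smul' := fun f m => by
        obtain ⟨c, rfl⟩ := h f
        simp } s

open TensorProduct

theorem TensorProduct.exists_finset_lTensor_eq_of_eqOn {R M N P : Type*} [CommSemiring R]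
    [AddCommMonoid M] [AddCommMonoid N] [AddCommMonoid P] [Module R M] [Module R N] [Module R P]
    (x : M ⊗[R] N) :
    ∃ s : Finset N, ∀ g h : N →ₗ[R] P, Set.EqOn g h s → g.lTensor M x = h.lTensor M x := by
  obtain ⟨S, rfl⟩ := exists_finsupp_right x
  refine ⟨S.support, fun g h hgh => ?_⟩
  simp only [Finsupp.sum, map_sum, LinearMap.lTensor_tmul]
  exact Finset.sum_congr rfl fun n hn => by rw [hgh hn]

theorem TensorProduct.exists_dual_rid_lTensor_ne_zero {R M N : Type*} [CommRing R]
    [AddCommGroup M] [AddCommGroup N] [Module R M] [Module R N] [Module.Free R N]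
    {x : M ⊗[R] N} (hx : x ≠ 0) :
    ∃ φ : Module.Dual R N, TensorProduct.rid R M (φ.lTensor M x) ≠ 0 := by
  classical
  let 𝒞 := Module.Free.chooseBasis R N
  obtain ⟨i, hi⟩ := Finsupp.ne_iff.1 <|
    (LinearEquiv.map_ne_zero_iff (equivFinsuppOfBasisRight 𝒞)).2 hx
  exact ⟨𝒞.coord i, by simpa [equivFinsuppOfBasisRight_apply] using hi⟩

theorem LinearMap.lTensor_smulRight_apply {R M N P : Type*} [CommSemiring R]
    [AddCommMonoid M] [AddCommMonoid N] [AddCommMonoid P] [Module R M] [Module R N] [Module R P]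
    (φ : Module.Dual R N) (p : P) (x : M ⊗[R] N) :
    (φ.smulRight p).lTensor M x = TensorProduct.rid R M (φ.lTensor M x) ⊗ₜ p := by
  induction x using TensorProduct.induction_on with
  | zero => simp
  | tmul m n => simp [TensorProduct.smul_tmul]
  | add x y hx hy => simp [hx, hy, TensorProduct.add_tmul]

section tensorMod

attribute [local instance] tensorMod

variable {A B W V : Type} [Ring A] [Algebra ℂ A] [Ring B] [Algebra ℂ B]
  [AddCommGroup W] [Module ℂ W] [Module A W] [IsScalarTower ℂ A W] [SMulCommClass ℂ A W]
  [AddCommGroup V] [Module ℂ V] [Module B V] [IsScalarTower ℂ B V] [SMulCommClass ℂ B V]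

theorem tensorMod_tmul_smul_tmul (a : A) (b : B) (w : W) (v : V) :
    (a ⊗ₜ[ℂ] b) • (w ⊗ₜ[ℂ] v) = (a • w) ⊗ₜ[ℂ] (b • v) :=
  rfl

theorem tensorMod_one_tmul_smul (b : B) (x : W ⊗[ℂ] V) :
    ((1 : A) ⊗ₜ[ℂ] b) • x = (Algebra.lsmul ℂ ℂ V b).lTensor W x := by
  induction x using TensorProduct.induction_on with
  | zero => simp
  | tmul w v => simp [tensorMod_tmul_smul_tmul]
  | add x y hx hy => simp [smul_add, hx, hy]

theorem tensorMod_eq_top_of_tmul_mem [IsSimpleModule A W] [IsSimpleModule B V]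
    {N : Submodule (A ⊗[ℂ] B) (W ⊗[ℂ] V)} {w : W} {v : V} (hw : w ≠ 0) (hv : v ≠ 0)
    (h : w ⊗ₜ[ℂ] v ∈ N) : N = ⊤ := by
  refine Submodule.eq_top_iff'.2 fun x => ?_
  induction x using TensorProduct.induction_on with
  | zero => exact N.zero_mem
  | tmul w' v' =>
    obtain ⟨a, rfl⟩ := IsSimpleModule.toSpanSingleton_surjective A hw w'
    obtain ⟨b, rfl⟩ := IsSimpleModule.toSpanSingleton_surjective B hv v'
    simpa [tensorMod_tmul_smul_tmul] using N.smul_mem (a ⊗ₜ b) h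
  | add x y hx hy => exact N.add_mem hx hy

theorem tensorMod_exists_tmul_mem_of_ne_bot [IsSemisimpleModule B V] [Nontrivial V]
    (hV : Function.Surjective (algebraMap ℂ (Module.End B V)))
    {N : Submodule (A ⊗[ℂ] B) (W ⊗[ℂ] V)} (hN : N ≠ ⊥) :
    ∃ w : W, ∃ v : V, w ≠ 0 ∧ v ≠ 0 ∧ w ⊗ₜ[ℂ] v ∈ N := by
  obtain ⟨x, hxN, hx⟩ := N.ne_bot_iff.1 hN
  obtain ⟨φ, hφ⟩ := TensorProduct.exists_dual_rid_lTensor_ne_zero hx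
  obtain ⟨s, hs⟩ := TensorProduct.exists_finset_lTensor_eq_of_eqOn (P := V) x
  obtain ⟨v, hv⟩ := exists_ne (0 : V)
  obtain ⟨b, hb⟩ := exists_smul_eq_of_algebraMap_end_surjective hV (φ.smulRight v) s
  have hbx : ((1 : A) ⊗ₜ[ℂ] b) • x = TensorProduct.rid ℂ W (φ.lTensor W x) ⊗ₜ v := by
    rw [tensorMod_one_tmul_smul, ← LinearMap.lTensor_smulRight_apply]
    exact hs _ _ fun m hm => (hb m hm).symm
  exact ⟨_, v, hφ, hv, hbx ▸ N.smul_mem _ hxN⟩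

end tensorMod

/-- Let `A` and `B` be unital associative `ℂ`-algebras with `B` of countable
`ℂ`-dimension. If `W` is a simple `A`-module and `V` is a simple `B`-module, then
`W ⊗_ℂ V` is a simple `A ⊗_ℂ B`-module. -/
theorem tensor_of_simple_isSimpleModule (A B W V : Type)
    [Ring A] [Algebra ℂ A] [Ring B] [Algebra ℂ B]
    [AddCommGroup W] [Module ℂ W] [Module A W] [IsScalarTower ℂ A W] [SMulCommClass ℂ A W]
    [AddCommGroup V] [Module ℂ V] [Module B V] [IsScalarTower ℂ B V] [SMulCommClass ℂ B V]
    (hB : Module.rank ℂ B ≤ Cardinal.aleph0)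
    (hW : IsSimpleModule A W) (hV : IsSimpleModule B V) :
    letI := tensorMod A B W V
    IsSimpleModule (A ⊗[ℂ] B) (W ⊗[ℂ] V) := by
  let _ := tensorMod A B W V
  have := IsSimpleModule.nontrivial A W
  have := IsSimpleModule.nontrivial B V
  obtain ⟨v, hv⟩ := exists_ne (0 : V)
  have hrank : Module.rank ℂ V < #ℂ := calc
    Module.rank ℂ V ≤ Module.rank ℂ B := LinearMap.rank_le_of_surjective
      ((LinearMap.toSpanSingleton B V v).restrictScalars ℂ)
      (IsSimpleModule.toSpanSingleton_surjective B hv)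
    _ ≤ ℵ₀ := hB
    _ < #ℂ := Cardinal.mk_complex ▸ Cardinal.aleph0_lt_continuum
  have hEnd := IsSimpleModule.algebraMap_end_surjective_of_rank_lt (K := ℂ) (R := B) (M := V)
    (by simpa using hrank)
  suffices IsSimpleOrder (Submodule (A ⊗[ℂ] B) (W ⊗[ℂ] V)) from ⟨⟩
  refine ⟨fun N => or_iff_not_imp_left.2 fun hN => ?_⟩
  obtain ⟨w, v, hw, hv, hwv⟩ := tensorMod_exists_tmul_mem_of_ne_bot hEnd hN
  exact tensorMod_eq_top_of_tmul_mem hw hv hwv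
end

section
/- Every simple weight module V over the Lie algebra 𝔪Δ (where 𝔪 = (t₁,…,t_n) ⊂ ℂ[t₁,…,t_n] and Δ = span{∂₁,…,∂_n}) satisfies 𝔪²Δ · V = 0; hence V is a simple 𝔤𝔩_n(ℂ)-module via the isomorphism 𝔪Δ/𝔪²Δ ≅ 𝔤𝔩_n. -/
/-- The partial derivative `∂ᵢ` as a derivation of `ℂ[t₁,…,t_n]`. -/
noncomputable def pd {n : ℕ} (i : Fin n) :
    Derivation ℂ (MvPolynomial (Fin n) ℂ) (MvPolynomial (Fin n) ℂ) :=
  MvPolynomial.mkDerivation ℂ (Pi.single i 1)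

/-- The element `t^α ∂ᵢ` of the Witt algebra `W_n⁺ = Der(ℂ[t₁,…,t_n])`. -/
noncomputable def wittElt {n : ℕ} (α : Fin n →₀ ℕ) (i : Fin n) :
    Derivation ℂ (MvPolynomial (Fin n) ℂ) (MvPolynomial (Fin n) ℂ) :=
  (MvPolynomial.monomial α (1 : ℂ)) • pd i


/-- The degree-`k` component of the Witt algebra `W_n⁺`, spanned by the `t^α ∂ᵢ`
with `|α| = k + 1`. -/
noncomputable def wittDeg (n : ℕ) (k : ℤ) :
    Submodule ℂ (Derivation ℂ (MvPolynomial (Fin n) ℂ) (MvPolynomial (Fin n) ℂ)) :=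
  Submodule.span ℂ {D | ∃ (α : Fin n →₀ ℕ) (i : Fin n),
    ((∑ j, α j : ℕ) : ℤ) = k + 1 ∧ D = wittElt α i}

/-- The Euler vector field `d = ∑ᵢ tᵢ∂ᵢ`. -/
noncomputable def eulerD (n : ℕ) :
    Derivation ℂ (MvPolynomial (Fin n) ℂ) (MvPolynomial (Fin n) ℂ) :=
  ∑ i, wittElt (Finsupp.single i 1) i

/-- The maximal ideal `𝔪 = (t₁,…,t_n)` of `ℂ[t₁,…,t_n]`. -/
noncomputable def mIdeal (n : ℕ) : Ideal (MvPolynomial (Fin n) ℂ) :=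
  RingHom.ker (MvPolynomial.constantCoeff : MvPolynomial (Fin n) ℂ →+* ℂ)

/-- The Lie subalgebra `𝔪Δ` of `W_n⁺`, consisting of the derivations preserving `𝔪`. -/
noncomputable def mDelta (n : ℕ) :
    LieSubalgebra ℂ (Derivation ℂ (MvPolynomial (Fin n) ℂ) (MvPolynomial (Fin n) ℂ)) where
  carrier := {D | ∀ f ∈ mIdeal n, D f ∈ mIdeal n}
  add_mem' := by
    intro D E hD hE f hf
    rw [Derivation.add_apply]
    exact (mIdeal n).add_mem (hD f hf) (hE f hf)
  zero_mem' := by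
    intro f hf
    rw [Derivation.zero_apply]
    exact (mIdeal n).zero_mem
  smul_mem' := by
    intro c D hD f hf
    rw [Derivation.smul_apply, Algebra.smul_def]
    exact Ideal.mul_mem_left _ _ (hD f hf)
  lie_mem' := by
    intro D E hD hE f hf
    rw [Derivation.commutator_apply]
    exact (mIdeal n).sub_mem (hD _ (hE f hf)) (hE _ (hD f hf))

lemma wittElt_mem_mDelta {n : ℕ} (α : Fin n →₀ ℕ) (i : Fin n) (hα : α ≠ 0) :
    wittElt α i ∈ mDelta n := by
  intro f hf
  rw [wittElt, Derivation.smul_apply, smul_eq_mul, mIdeal, RingHom.mem_ker, map_mul,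
    MvPolynomial.constantCoeff_monomial, if_neg hα, zero_mul]

lemma mDelta_pow_two {n : ℕ} {D : Derivation ℂ (MvPolynomial (Fin n) ℂ) (MvPolynomial (Fin n) ℂ)}
    (hD : D ∈ mDelta n) : ∀ g ∈ (mIdeal n) ^ 2, D g ∈ (mIdeal n) ^ 2 := by
  intro g hg
  rw [sq] at hg ⊢
  refine Submodule.mul_induction_on hg (fun a ha b hb => ?_) (fun x y hx hy => ?_)
  · rw [Derivation.leibniz, smul_eq_mul, smul_eq_mul]
    exact Submodule.add_mem _ (Ideal.mul_mem_mul ha (hD b hb)) (Ideal.mul_mem_mul hb (hD a ha))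
  · rw [map_add]
    exact Submodule.add_mem _ hx hy

/-- The Lie ideal `𝔪²Δ` of `𝔪Δ`: derivations mapping `𝔪` into `𝔪²`. -/
noncomputable def m2DeltaIdeal (n : ℕ) : LieIdeal ℂ (mDelta n) where
  carrier := {D | ∀ f ∈ mIdeal n, (D : Derivation ℂ (MvPolynomial (Fin n) ℂ)
    (MvPolynomial (Fin n) ℂ)) f ∈ (mIdeal n) ^ 2}
  add_mem' := by
    intro D E hD hE f hf
    rw [show ((D + E : ↥(mDelta n)) : Derivation ℂ (MvPolynomial (Fin n) ℂ) (MvPolynomial (Fin n) ℂ)) = ↑D + ↑E from rfl, Derivation.add_apply]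
    exact Submodule.add_mem _ (hD f hf) (hE f hf)
  zero_mem' := by
    intro f hf
    rw [show ((0 : ↥(mDelta n)) : Derivation ℂ (MvPolynomial (Fin n) ℂ) (MvPolynomial (Fin n) ℂ)) = 0 from rfl, Derivation.zero_apply]
    exact Submodule.zero_mem _
  smul_mem' := by
    intro c D hD f hf
    rw [show ((c • D : ↥(mDelta n)) : Derivation ℂ (MvPolynomial (Fin n) ℂ) (MvPolynomial (Fin n) ℂ)) = c • ↑D from rfl, Derivation.smul_apply, Algebra.smul_def]
    exact Ideal.mul_mem_left _ _ (hD f hf)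
  lie_mem := by
    intro D E hE f hf
    rw [show ((⁅D, E⁆ : ↥(mDelta n)) : Derivation ℂ (MvPolynomial (Fin n) ℂ) (MvPolynomial (Fin n) ℂ)) = ⁅(D : Derivation ℂ (MvPolynomial (Fin n) ℂ) (MvPolynomial (Fin n) ℂ)), ↑E⁆ from rfl, Derivation.commutator_apply]
    refine Submodule.sub_mem _ (mDelta_pow_two D.2 _ (hE f hf)) (hE _ (D.2 f hf))

/-- The eigenspace of `x ∈ L` acting on a Lie module `V` with eigenvalue `c`. -/
noncomputable def lieEigSp {L : Type*} [LieRing L] [LieAlgebra ℂ L] (V : Type*)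
    [AddCommGroup V] [Module ℂ V] [LieRingModule L V] [LieModule ℂ L V]
    (x : L) (c : ℂ) : Submodule ℂ V where
  carrier := {v | ⁅x, v⁆ = c • v}
  add_mem' := by
    intro u v hu hv
    simp only [Set.mem_setOf_eq, lie_add, smul_add] at *
    rw [hu, hv]
  zero_mem' := by simp
  smul_mem' := by
    intro r v hv
    simp only [Set.mem_setOf_eq] at *
    rw [lie_smul, hv, smul_comm]

/-! The Euler field `d = ∑ tᵢ∂ᵢ` satisfies `⁅d, t^α∂ᵢ⁆ = (|α| - 1) t^α∂ᵢ`, so `𝔪Δ` is spanned by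
`ad d`-eigenvectors with eigenvalues in `ℕ` and `𝔪²Δ` by those with eigenvalues in `1 + ℕ`.
On a weight module `d` acts diagonalizably; let `v₀ ≠ 0` satisfy `d v₀ = c v₀`. For every `c'`
the sum of the `d`-eigenspaces with eigenvalues in `c' + ℕ` is then a submodule. For `c' = c` it
contains `v₀`, so it is all of `V`; hence `𝔪²Δ · V` lies in the one for `c' = c + 1`, which misses
`v₀` by independence of eigenspaces and so is zero. -/

namespace Module.End

variable {R M : Type*} [CommRing R] [AddCommGroup M] [Module R M]

def eigenspacesFrom (f : End R M) (c : R) : Submodule R M :=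
  ⨆ k : ℕ, f.eigenspace (c + k)

lemma eigenspace_le_eigenspacesFrom (f : End R M) (c : R) (k : ℕ) :
    f.eigenspace (c + k) ≤ f.eigenspacesFrom c :=
  le_iSup (fun k : ℕ => f.eigenspace (c + k)) k

lemma disjoint_eigenspace_eigenspacesFrom_add_one [IsDomain R] [CharZero R] [IsTorsionFree R M]
    (f : End R M) (c : R) : Disjoint (f.eigenspace c) (f.eigenspacesFrom (c + 1)) := by
  refine (f.eigenspaces_iSupIndep c).mono_right (iSup_le fun k => ?_)
  have hne : c + 1 + k ≠ c := by
    intro h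
    have : (k : R) + 1 = 0 := by linear_combination h
    exact Nat.cast_add_one_ne_zero k this
  exact le_iSup₂_of_le (f := fun μ (_ : μ ≠ c) => f.eigenspace μ) _ hne le_rfl

lemma iInf_eigenspace_le_eigenspace_sum {ι : Type*} [Fintype ι] (f : ι → End R M) (μ : ι → R) :
    ⨅ i, (f i).eigenspace (μ i) ≤ (∑ i, f i).eigenspace (∑ i, μ i) := by
  intro v hv
  rw [mem_eigenspace_iff, LinearMap.sum_apply, Finset.sum_smul]
  exact Finset.sum_congr rfl fun i _ => mem_eigenspace_iff.mp ((Submodule.mem_iInf _).mp hv i)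

end Module.End

section

open LieModule LieAlgebra Module.End

variable {R L M : Type*} [CommRing R] [LieRing L] [LieAlgebra R L] [AddCommGroup M] [Module R M]
  [LieRingModule L M] [LieModule R L M]

lemma lie_mem_eigenspace_add {d x : L} {v : M} {a b : R} (hx : x ∈ (ad R L d).eigenspace a)
    (hv : v ∈ (toEnd R L M d).eigenspace b) : ⁅x, v⁆ ∈ (toEnd R L M d).eigenspace (a + b) := by
  rw [mem_eigenspace_iff, ad_apply] at hx
  rw [mem_eigenspace_iff, toEnd_apply_apply] at hv ⊢
  rw [leibniz_lie, hx, hv, smul_lie, lie_smul, add_smul]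

lemma lie_mem_eigenspacesFrom_add {d x : L} {v : M} {s c : R}
    (hx : x ∈ (ad R L d).eigenspacesFrom s) (hv : v ∈ (toEnd R L M d).eigenspacesFrom c) :
    ⁅x, v⁆ ∈ (toEnd R L M d).eigenspacesFrom (c + s) := by
  let bracket : L →ₗ[R] M →ₗ[R] M := toEnd R L M
  suffices h : Submodule.map₂ bracket ((ad R L d).eigenspacesFrom s)
      ((toEnd R L M d).eigenspacesFrom c) ≤ (toEnd R L M d).eigenspacesFrom (c + s) from
    h (Submodule.apply_mem_map₂ bracket hx hv)
  rw [eigenspacesFrom, Submodule.map₂_iSup_left]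
  refine iSup_le fun a => ?_
  rw [eigenspacesFrom, Submodule.map₂_iSup_right]
  refine iSup_le fun b => Submodule.map₂_le.mpr fun y hy w hw => ?_
  refine eigenspace_le_eigenspacesFrom _ _ (b + a) ?_
  convert lie_mem_eigenspace_add hy hw using 2
  · push_cast
    ring
  · rfl

variable (R M) in
def eigenspacesFromLieSubmodule (d : L) (hd : ∀ x : L, x ∈ (ad R L d).eigenspacesFrom 0) (c : R) :
    LieSubmodule R L M where
  toSubmodule := (toEnd R L M d).eigenspacesFrom c
  lie_mem hv := by simpa using lie_mem_eigenspacesFrom_add (hd _) hv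

end

open LieModule LieAlgebra Module.End in
theorem lie_eq_zero_of_mem_eigenspacesFrom_one {K L M : Type*} [Field K] [CharZero K] [LieRing L]
    [LieAlgebra K L] [AddCommGroup M] [Module K M] [LieRingModule L M] [LieModule K L M]
    [IsIrreducible K L M] {d : L} (hM : ⨆ c, (toEnd K L M d).eigenspace c = ⊤)
    (hd : ∀ x : L, x ∈ (ad K L d).eigenspacesFrom 0) {x : L}
    (hx : x ∈ (ad K L d).eigenspacesFrom 1) (v : M) : ⁅x, v⁆ = 0 := by
  have : Nontrivial M := nontrivial_of_isIrreducible K L M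
  obtain ⟨c, hc⟩ : ∃ c, (toEnd K L M d).eigenspace c ≠ ⊥ := by
    by_contra! h
    rw [iSup_eq_bot.mpr h] at hM
    exact bot_ne_top hM
  obtain ⟨v₀, hv₀, hv₀_ne⟩ := (Submodule.ne_bot_iff _).mp hc
  have h_top : eigenspacesFromLieSubmodule K M d hd c = ⊤ := by
    refine (eq_bot_or_eq_top _).resolve_left fun h => hv₀_ne ?_
    have : v₀ ∈ eigenspacesFromLieSubmodule K M d hd c :=
      eigenspace_le_eigenspacesFrom _ c 0 (by simpa using hv₀)
    rwa [h, LieSubmodule.mem_bot] at this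
  have h_bot : eigenspacesFromLieSubmodule K M d hd (c + 1) = ⊥ := by
    refine (eq_bot_or_eq_top _).resolve_right fun h => hv₀_ne ?_
    have : v₀ ∈ eigenspacesFromLieSubmodule K M d hd (c + 1) := h ▸ LieSubmodule.mem_top v₀
    exact Submodule.disjoint_def.mp (disjoint_eigenspace_eigenspacesFrom_add_one _ c) v₀ hv₀ this
  have hv : v ∈ eigenspacesFromLieSubmodule K M d hd c := h_top ▸ LieSubmodule.mem_top v
  have h_lie : ⁅x, v⁆ ∈ eigenspacesFromLieSubmodule K M d hd (c + 1) :=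
    lie_mem_eigenspacesFrom_add hx hv
  rwa [h_bot, LieSubmodule.mem_bot] at h_lie

lemma Derivation.sum_apply {R A M ι : Type*} [CommSemiring R] [CommSemiring A] [Algebra R A]
    [AddCommMonoid M] [Module A M] [Module R M] (s : Finset ι) (D : ι → Derivation R A M) (a : A) :
    (∑ i ∈ s, D i) a = ∑ i ∈ s, D i a := by
  rw [← Derivation.coeFnAddMonoidHom_apply, map_sum, Finset.sum_apply]
  rfl

section

open MvPolynomial LieModule LieAlgebra Module.End

variable {n : ℕ}

local notation "W" => Derivation ℂ (MvPolynomial (Fin n) ℂ) (MvPolynomial (Fin n) ℂ)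

lemma mIdeal_eq_idealOfVars : mIdeal n = idealOfVars (Fin n) ℂ := by
  ext p
  rw [← pow_one (idealOfVars _ _), mem_pow_idealOfVars_iff, mIdeal, RingHom.mem_ker,
    constantCoeff_eq]
  constructor
  · intro h α hα
    rw [Nat.one_le_iff_ne_zero, Ne, Finsupp.degree_eq_zero_iff]
    rintro rfl
    exact (mem_support_iff.mp hα) h
  · intro h
    by_contra h0
    simpa using h 0 (mem_support_iff.mpr h0)

lemma X_mem_mIdeal (j : Fin n) : (X j : MvPolynomial (Fin n) ℂ) ∈ mIdeal n := by
  rw [mIdeal, RingHom.mem_ker, constantCoeff_X]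

lemma eulerD_apply (p : MvPolynomial (Fin n) ℂ) : eulerD n p = ∑ i, X i * pderiv i p := by
  rw [eulerD, Derivation.sum_apply]
  refine Finset.sum_congr rfl fun i _ => ?_
  rw [wittElt, Derivation.smul_apply, smul_eq_mul, pd, ← pderiv_def, X]

lemma eulerD_monomial (α : Fin n →₀ ℕ) (c : ℂ) :
    eulerD n (monomial α c) = α.degree • monomial α c := by
  rw [eulerD_apply, (isHomogeneous_monomial c rfl).sum_X_mul_pderiv]

lemma wittElt_apply_X (α : Fin n →₀ ℕ) (i j : Fin n) :
    wittElt α i (X j) = if j = i then monomial α 1 else 0 := by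
  rw [wittElt, Derivation.smul_apply, pd, ← pderiv_def, pderiv_X, Pi.single_apply, smul_eq_mul,
    mul_ite, mul_one, mul_zero]

lemma lie_eulerD_wittElt (α : Fin n →₀ ℕ) (i : Fin n) :
    ⁅eulerD n, wittElt α i⁆ = ((α.degree : ℂ) - 1) • wittElt α i := by
  refine derivation_ext fun j => ?_
  have hX : eulerD n (X j) = X j := by
    simpa [X] using eulerD_monomial (Finsupp.single j 1) 1
  rw [Derivation.commutator_apply, Derivation.smul_apply, hX, wittElt_apply_X]
  split_ifs
  · rw [eulerD_monomial, sub_smul, one_smul, Nat.cast_smul_eq_nsmul]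
  · rw [map_zero, smul_zero, sub_zero]

noncomputable def eulerElt (n : ℕ) : mDelta n :=
  ∑ i, ⟨wittElt (Finsupp.single i 1) i, wittElt_mem_mDelta _ _ (by simp)⟩

lemma coe_eulerElt : (eulerElt n : W) = eulerD n :=
  AddSubmonoidClass.coe_finsetSum _ _

lemma wittElt_mem_eigenspacesFrom {α : Fin n →₀ ℕ} (i : Fin n) {s : ℕ}
    (hα : s + 1 ≤ α.degree) (hα₀ : α ≠ 0) :
    (⟨wittElt α i, wittElt_mem_mDelta α i hα₀⟩ : mDelta n) ∈
      (ad ℂ (mDelta n) (eulerElt n)).eigenspacesFrom s := by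
  refine eigenspace_le_eigenspacesFrom _ _ (α.degree - (s + 1)) ?_
  rw [mem_eigenspace_iff, ad_apply]
  refine Subtype.ext ?_
  rw [LieSubalgebra.coe_bracket, coe_eulerElt, lie_eulerD_wittElt, SetLike.val_smul]
  congr 1
  rw [Nat.cast_sub hα]
  push_cast
  ring

lemma eq_sum_wittElt (D : W) :
    D = ∑ j, ∑ α ∈ (D (X j)).support, coeff α (D (X j)) • wittElt α j := by
  refine derivation_ext fun m => ?_
  conv_lhs => rw [← support_sum_monomial_coeff (D (X m))]
  simp only [Derivation.sum_apply, Derivation.smul_apply, wittElt_apply_X, smul_ite, smul_zero,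
    smul_monomial, smul_eq_mul, mul_one, ← Finset.ite_sum_zero, Finset.sum_ite_eq,
    Finset.mem_univ, if_true]

lemma mem_eigenspacesFrom_of_forall_mem_pow {x : mDelta n} {s : ℕ}
    (hx : ∀ j, (x : W) (X j) ∈ mIdeal n ^ (s + 1)) :
    x ∈ (ad ℂ (mDelta n) (eulerElt n)).eigenspacesFrom s := by
  suffices h : (x : W) ∈ ((ad ℂ (mDelta n) (eulerElt n)).eigenspacesFrom s).map
      (mDelta n).toSubmodule.subtype by
    obtain ⟨y, hy, hyx⟩ := Submodule.mem_map.mp h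
    rwa [← Subtype.ext hyx]
  rw [eq_sum_wittElt (x : W)]
  refine Submodule.sum_mem _ fun j _ => Submodule.sum_mem _ fun α hα => Submodule.smul_mem _ _ ?_
  simp only [mIdeal_eq_idealOfVars, mem_pow_idealOfVars_iff] at hx
  have hα₁ : s + 1 ≤ α.degree := hx j α hα
  have hα₀ : α ≠ 0 := by
    rintro rfl
    simp at hα₁
  exact Submodule.mem_map_of_mem (wittElt_mem_eigenspacesFrom j hα₁ hα₀)

lemma mem_eigenspacesFrom_zero (x : mDelta n) :
    x ∈ (ad ℂ (mDelta n) (eulerElt n)).eigenspacesFrom 0 := by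
  simpa using mem_eigenspacesFrom_of_forall_mem_pow (s := 0) fun j => by
    simpa using x.2 _ (X_mem_mIdeal j)

lemma mem_eigenspacesFrom_one_of_mem_m2DeltaIdeal {x : mDelta n} (hx : x ∈ m2DeltaIdeal n) :
    x ∈ (ad ℂ (mDelta n) (eulerElt n)).eigenspacesFrom 1 := by
  simpa using mem_eigenspacesFrom_of_forall_mem_pow (s := 1) fun j => hx _ (X_mem_mIdeal j)

lemma lieEigSp_eq_eigenspace {L : Type*} [LieRing L] [LieAlgebra ℂ L] (V : Type*)
    [AddCommGroup V] [Module ℂ V] [LieRingModule L V] [LieModule ℂ L V] (x : L) (c : ℂ) :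
    lieEigSp V x c = (toEnd ℂ L V x).eigenspace c := by
  ext v
  rw [mem_eigenspace_iff, toEnd_apply_apply]
  rfl

lemma iSup_eigenspace_eulerElt_eq_top {V : Type*} [AddCommGroup V] [Module ℂ V]
    [LieRingModule (mDelta n) V] [LieModule ℂ (mDelta n) V]
    (hweight : (⨆ μ : Fin n → ℂ, ⨅ i : Fin n,
      lieEigSp V (⟨wittElt (Finsupp.single i 1) i, wittElt_mem_mDelta _ _ (by simp)⟩ :
        mDelta n) (μ i)) = ⊤) :
    ⨆ c, (toEnd ℂ (mDelta n) V (eulerElt n)).eigenspace c = ⊤ := by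
  refine eq_top_iff.mpr (hweight.symm.le.trans (iSup_le fun μ => le_iSup_of_le (∑ i, μ i) ?_))
  simp only [lieEigSp_eq_eigenspace, eulerElt, map_sum]
  exact iInf_eigenspace_le_eigenspace_sum _ μ

end

/-- Every simple weight module `V` over the Lie algebra `𝔪Δ` (weight meaning
that `d₁ = t₁∂₁, …, d_n = t_n∂_n` act simultaneously diagonalizably) satisfies
`𝔪²Δ · V = 0` (hence is a module for `𝔪Δ/𝔪²Δ ≅ 𝔤𝔩_n`). -/
theorem simple_weight_mDelta_module_trivial_m2 (n : ℕ) (V : Type) [AddCommGroup V]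
    [Module ℂ V] [LieRingModule (mDelta n) V] [LieModule ℂ (mDelta n) V]
    (hirr : LieModule.IsIrreducible ℂ (mDelta n) V)
    (hweight : (⨆ μ : Fin n → ℂ, ⨅ i : Fin n,
      lieEigSp V (⟨wittElt (Finsupp.single i 1) i, wittElt_mem_mDelta _ _ (by simp)⟩ :
        mDelta n) (μ i)) = ⊤) :
    ∀ x : mDelta n, (x ∈ m2DeltaIdeal n) → ∀ v : V, ⁅x, v⁆ = 0 := fun _ hx =>
  lie_eq_zero_of_mem_eigenspacesFrom_one (iSup_eigenspace_eulerElt_eq_top hweight)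
    mem_eigenspacesFrom_zero (mem_eigenspacesFrom_one_of_mem_m2DeltaIdeal hx)
end

section
/- Let 𝔤 be a Lie algebra with a ℤ-grading 𝔤 = ⊕_{k ≥ −1} 𝔤_k induced by an element d ∈ 𝔤₀ (i.e., [d,x] = kx for x ∈ 𝔤_k), and let 𝔫 = ⊕_{k ≥ 0} 𝔤_k, 𝔫⁺ = ⊕_{k ≥ 1} 𝔤_k. If V is a simple 𝔫-module on which d acts diagonalizably with eigenvalues contained in λ + ℤ_{≥0} for some λ that is itself an eigenvalue, then 𝔫⁺ · V is a proper submodule of V, hence 𝔫⁺ · V = 0. -/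
section Eigenspaces

variable {L : Type*} [LieRing L] [LieAlgebra ℂ L] {V : Type*} [AddCommGroup V] [Module ℂ V]
  [LieRingModule L V] [LieModule ℂ L V]

theorem lieEigSp_eq_eigenspace_s17 (x : L) (c : ℂ) :
    lieEigSp V x c = (LieModule.toEnd ℂ L V x).eigenspace c := by
  ext v
  rw [Module.End.mem_eigenspace_iff]
  rfl

theorem lie_mem_lieEigSp_add {d x : L} {a c : ℂ} (hx : ⁅d, x⁆ = a • x) {v : V}
    (hv : v ∈ lieEigSp V d c) : ⁅x, v⁆ ∈ lieEigSp V d (c + a) := by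
  change ⁅d, ⁅x, v⁆⁆ = (c + a) • ⁅x, v⁆
  have hdv : ⁅d, v⁆ = c • v := hv
  rw [leibniz_lie, hx, hdv, smul_lie, lie_smul, add_smul, add_comm]

theorem disjoint_lieEigSp_iSup_add_succ (d : L) (c : ℂ) :
    Disjoint (lieEigSp V d c) (⨆ j : ℕ, lieEigSp V d (c + (j + 1 : ℕ))) := by
  simp only [lieEigSp_eq_eigenspace_s17]
  refine (Module.End.eigenspaces_iSupIndep _ c).mono_right (iSup_le fun j => ?_)
  refine le_iSup₂_of_le (c + (j + 1 : ℕ)) ?_ le_rfl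
  simpa using Nat.cast_add_one_ne_zero (R := ℂ) j

end Eigenspaces

theorem lie_mem_of_mem_iSup {R L M : Type*} [CommRing R] [LieRing L] [Module R L]
    [AddCommGroup M] [Module R M] [LieRingModule L M]
    {ι κ : Sort*} {A : ι → Submodule R L} {B : κ → Submodule R M} {P : Submodule R M}
    (h : ∀ i j, ∀ x ∈ A i, ∀ m ∈ B j, ⁅x, m⁆ ∈ P) {x : L} (hx : x ∈ ⨆ i, A i) {m : M}
    (hm : m ∈ ⨆ j, B j) : ⁅x, m⁆ ∈ P := by
  induction hx using Submodule.iSup_induction' with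
  | mem i x hx =>
    induction hm using Submodule.iSup_induction' with
    | mem j m hm => exact h i j x hx m hm
    | zero => simp
    | add m m' _ _ hm hm' => rw [lie_add]; exact P.add_mem hm hm'
  | zero => simp
  | add x x' _ _ hx hx' => rw [add_lie]; exact P.add_mem hx hx'

section Graded

variable {R L : Type*} [CommRing R] [LieRing L] [Module R L] {g : ℕ → Submodule R L}

def positivePart (g : ℕ → Submodule R L) : Submodule R L :=
  ⨆ k, g (k + 1)

theorem mem_positivePart {k : ℕ} (hk : 1 ≤ k) {x : L} (hx : x ∈ g k) : x ∈ positivePart g := by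
  obtain ⟨k, rfl⟩ := Nat.exists_eq_add_of_le' hk
  exact Submodule.mem_iSup_of_mem k hx

theorem lie_mem_positivePart (hsup : (⨆ k, g k) = ⊤)
    (hbracket : ∀ k l : ℕ, ∀ x ∈ g k, ∀ y ∈ g l, ⁅x, y⁆ ∈ g (k + l)) (y : L) {x : L}
    (hx : x ∈ positivePart g) : ⁅y, x⁆ ∈ positivePart g :=
  lie_mem_of_mem_iSup
    (fun l k y hy x hx => mem_positivePart (by omega) (hbracket l (k + 1) y hy x hx))
    (hsup ▸ Submodule.mem_top) hx

end Graded

def positivePartIdeal {R L : Type*} [CommRing R] [LieRing L] [LieAlgebra R L]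
    (g : ℕ → Submodule R L) (hsup : (⨆ k, g k) = ⊤)
    (hbracket : ∀ k l : ℕ, ∀ x ∈ g k, ∀ y ∈ g l, ⁅x, y⁆ ∈ g (k + l)) : LieIdeal R L :=
  { positivePart g with lie_mem := lie_mem_positivePart hsup hbracket _ }

theorem lie_mem_iSup_lieEigSp_add_succ {L : Type*} [LieRing L] [LieAlgebra ℂ L]
    {g : ℕ → Submodule ℂ L} {d : L} (had : ∀ k : ℕ, ∀ x ∈ g k, ⁅d, x⁆ = (k : ℂ) • x)
    {V : Type*} [AddCommGroup V] [Module ℂ V] [LieRingModule L V] [LieModule ℂ L V] {lam : ℂ}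
    (hdiag : (⨆ j : ℕ, lieEigSp V d (lam + j)) = ⊤) {x : L} (hx : x ∈ positivePart g) (v : V) :
    ⁅x, v⁆ ∈ ⨆ j : ℕ, lieEigSp V d (lam + (j + 1 : ℕ)) := by
  refine lie_mem_of_mem_iSup (fun k j x hx v hv => ?_) hx (hdiag ▸ Submodule.mem_top)
  refine Submodule.mem_iSup_of_mem (j + k) ?_
  convert lie_mem_lieEigSp_add (had _ x hx) hv using 2
  push_cast
  ring

theorem positive_part_annihilates_general (N : Type) [LieRing N] [LieAlgebra ℂ N]
    (g : ℕ → Submodule ℂ N)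
    (hsup : (⨆ k : ℕ, g k) = ⊤)
    (hbracket : ∀ k l : ℕ, ∀ x ∈ g k, ∀ y ∈ g l, ⁅x, y⁆ ∈ g (k + l))
    (d : N)
    (had : ∀ k : ℕ, ∀ x ∈ g k, ⁅d, x⁆ = (k : ℂ) • x)
    (V : Type) [AddCommGroup V] [Module ℂ V] [LieRingModule N V] [LieModule ℂ N V]
    (hirr : LieModule.IsIrreducible ℂ N V)
    (lam : ℂ)
    (hdiag : (⨆ j : ℕ, lieEigSp V d (lam + j)) = ⊤)
    (hlam : lieEigSp V d lam ≠ ⊥) :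
    (∀ k : ℕ, 1 ≤ k → ∀ x ∈ g k, ∀ v : V, ⁅x, v⁆ = 0) := by
  intro k hk x hx v
  set W : LieSubmodule ℂ N V := ⁅positivePartIdeal g hsup hbracket, ⊤⁆
  have hle : W.toSubmodule ≤ ⨆ j : ℕ, lieEigSp V d (lam + (j + 1 : ℕ)) := by
    rw [LieSubmodule.lieIdeal_oper_eq_linear_span', Submodule.span_le]
    rintro _ ⟨y, hy, m, -, rfl⟩
    exact lie_mem_iSup_lieEigSp_add_succ had hdiag hy m
  have hne : W ≠ ⊤ := by
    intro htop
    rw [htop, LieSubmodule.top_toSubmodule] at hle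
    exact hlam <| (disjoint_lieEigSp_iSup_add_succ d lam).eq_bot_of_le (le_top.trans hle)
  have hbot : W = ⊥ := (IsSimpleOrder.eq_bot_or_eq_top (self := hirr) W).resolve_right hne
  have hmem : ⁅x, v⁆ ∈ W := LieSubmodule.lie_mem_lie (mem_positivePart hk hx) trivial
  rwa [hbot, LieSubmodule.mem_bot] at hmem

/-- Let `𝔫 = ⊕_{k ≥ 0} 𝔤_k` be the nonnegative part of a Lie algebra graded
in degrees `≥ −1`, the grading being induced by an element `d ∈ 𝔤₀` (i.e. `[d,x] = k·x` for
`x ∈ 𝔤_k`), and let `𝔫⁺ = ⊕_{k ≥ 1} 𝔤_k`.  If `V` is a simple `𝔫`-module on which `d` acts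
diagonalizably with eigenvalues contained in `λ + ℤ_{≥0}`, where `λ` itself is an eigenvalue,
then `𝔫⁺ · V` is a proper submodule of `V`; hence `𝔫⁺ · V = 0`. -/
theorem positive_part_annihilates (N : Type) [LieRing N] [LieAlgebra ℂ N]
    (g : ℕ → Submodule ℂ N)
    (hsup : (⨆ k : ℕ, g k) = ⊤)
    (hbracket : ∀ k l : ℕ, ∀ x ∈ g k, ∀ y ∈ g l, ⁅x, y⁆ ∈ g (k + l))
    (d : N) (hd : d ∈ g 0)
    (had : ∀ k : ℕ, ∀ x ∈ g k, ⁅d, x⁆ = (k : ℂ) • x)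
    (V : Type) [AddCommGroup V] [Module ℂ V] [LieRingModule N V] [LieModule ℂ N V]
    (hirr : LieModule.IsIrreducible ℂ N V)
    (lam : ℂ)
    (hdiag : (⨆ j : ℕ, lieEigSp V d (lam + j)) = ⊤)
    (hlam : lieEigSp V d lam ≠ ⊥) :
    (∀ k : ℕ, 1 ≤ k → ∀ x ∈ g k, ∀ v : V, ⁅x, v⁆ = 0) :=
  positive_part_annihilates_general N g hsup hbracket d had V hirr lam hdiag hlam
end
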